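/- arXiv:2602.07813 — 5 statements merged into one kernel-verified Lean document; each statement's English description precedes it below -/
import Mathlib

section
/- Let E be a real normed vector space, let n ≥ 1, and let v, w : Fin n → E. Then the Hausdorff distance between the convex hulls conv{v_0, …, v_{n−1}} and conv{w_0, …, w_{n−1}} is at most max_{0 ≤ i ≤ n−1} ‖v_i − w_i‖. -/
private lemma key_half {E : Type*} [NormedAddCommGroup E] [NormedSpace ℝ E]
    (n : ℕ) (hn : 1 ≤ n) (v w : Fin n → E) :
    ∀ x ∈ convexHull ℝ (Set.range v), ∃ y ∈ convexHull ℝ (Set.range w),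
      dist x y ≤ ⨆ i : Fin n, ‖v i - w i‖ := by
  intro x hx
  rw [convexHull_range_eq_exists_affineCombination] at hx
  obtain ⟨s, a, h0, h1, rfl⟩ := hx
  refine ⟨s.affineCombination ℝ w a, ?_, ?_⟩
  · rw [convexHull_range_eq_exists_affineCombination]
    exact ⟨s, a, h0, h1, rfl⟩
  · have hne : Nonempty (Fin n) := ⟨⟨0, hn⟩⟩
    have hbdd : BddAbove (Set.range fun i : Fin n => ‖v i - w i‖) :=
      Set.Finite.bddAbove (Set.finite_range _)
    rw [dist_eq_norm, Finset.affineCombination_eq_linear_combination s v a h1,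
      Finset.affineCombination_eq_linear_combination s w a h1, ← Finset.sum_sub_distrib]
    calc ‖∑ i ∈ s, (a i • v i - a i • w i)‖ ≤ ∑ i ∈ s, ‖a i • v i - a i • w i‖ :=
          norm_sum_le _ _
      _ ≤ ∑ i ∈ s, a i * (⨆ i : Fin n, ‖v i - w i‖) := by
          refine Finset.sum_le_sum fun i hi => ?_
          rw [← smul_sub, norm_smul, Real.norm_eq_abs, abs_of_nonneg (h0 i hi)]
          exact mul_le_mul_of_nonneg_left (le_ciSup hbdd i) (h0 i hi)
      _ = (⨆ i : Fin n, ‖v i - w i‖) := by rw [← Finset.sum_mul, h1, one_mul]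

/-- The Hausdorff distance between the convex hulls of two finite point lists is at
most the maximum distance between corresponding points. -/
theorem stmt9 {E : Type*} [NormedAddCommGroup E] [NormedSpace ℝ E]
    (n : ℕ) (hn : 1 ≤ n) (v w : Fin n → E) :
    Metric.hausdorffDist (convexHull ℝ (Set.range v)) (convexHull ℝ (Set.range w)) ≤
      ⨆ i : Fin n, ‖v i - w i‖ := by
  have hne : Nonempty (Fin n) := ⟨⟨0, hn⟩⟩
  have hbdd : BddAbove (Set.range fun i : Fin n => ‖v i - w i‖) :=
    Set.Finite.bddAbove (Set.finite_range _)
  have hr : 0 ≤ ⨆ i : Fin n, ‖v i - w i‖ :=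
    le_trans (norm_nonneg _) (le_ciSup hbdd (Classical.arbitrary _))
  have hsymm : (⨆ i : Fin n, ‖w i - v i‖) = ⨆ i : Fin n, ‖v i - w i‖ := by
    simp_rw [norm_sub_rev]
  refine Metric.hausdorffDist_le_of_mem_dist hr (key_half n hn v w) fun x hx => ?_
  obtain ⟨y, hy, hd⟩ := key_half n hn w v x hx
  exact ⟨y, hy, hsymm ▸ hd⟩
end

section
/- Let n ≥ 1 and let v, w : Fin n → ℝ² be two point lists, and set δ = max_{0 ≤ i ≤ n−1} ‖v_i − w_i‖. Then the symmetric difference conv{v_0, …, v_{n−1}} Δ conv{w_0, …, w_{n−1}} is contained in the set of points whose distance to the frontier of conv{v_0, …, v_{n−1}} is at most δ, i.e. in the closed δ-thickening of ∂(conv{v_i}). -/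
/-!
Let `A = conv{vᵢ}`, `B = conv{wᵢ}`. Each vertex of one hull is within `δ` of a vertex of the
other, so by convexity of closed thickenings `A ⊆ cthickening δ B` and `B ⊆ cthickening δ A`.
If `x` is farther than `δ` from `∂A`, the closed ball `closedBall x δ` is connected and misses
`∂A`, so it lies in `A` as soon as it meets `A`. For `x ∈ A` this gives
`closedBall x δ ⊆ cthickening δ B`, which forces `x ∈ B` by separating `x` from `B`;
for `x ∈ B` the ball meets `A`, so `x ∈ A`.
-/

open Metric Set

theorem IsPreconnected.subset_of_disjoint_frontier {X : Type*} [TopologicalSpace X]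
    {s t : Set X} (hs : IsPreconnected s) (hfr : Disjoint s (frontier t))
    (hne : (s ∩ t).Nonempty) : s ⊆ t := by
  have hcover : s ⊆ interior t ∪ interior tᶜ := by
    rw [← compl_frontier_eq_union_interior]
    exact hfr.subset_compl_right
  have hdisj : Disjoint (interior t) (interior tᶜ) :=
    (disjoint_compl_right.mono interior_subset interior_subset)
  obtain ⟨p, hps, hpt⟩ := hne
  have hp : p ∈ interior t :=
    (hcover hps).resolve_right fun h => interior_subset h hpt
  exact (hs.subset_left_of_subset_union isOpen_interior isOpen_interior hdisj hcover
    ⟨p, hps, hp⟩).trans interior_subset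

theorem convexHull_range_subset_cthickening {ι E : Type*} [SeminormedAddCommGroup E]
    [NormedSpace ℝ E] (v w : ι → E) {δ : ℝ} (h : ∀ i, dist (w i) (v i) ≤ δ) :
    convexHull ℝ (range w) ⊆ cthickening δ (convexHull ℝ (range v)) := by
  refine convexHull_min ?_ ((convex_convexHull ℝ _).cthickening δ)
  rintro _ ⟨i, rfl⟩
  exact mem_cthickening_of_dist_le _ _ _ _ (subset_convexHull ℝ _ (mem_range_self i)) (h i)

theorem Convex.mem_of_closedBall_subset_cthickening {E : Type*} [NormedAddCommGroup E]
    [InnerProductSpace ℝ E] [ProperSpace E] {B : Set E} {x : E} {δ : ℝ}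
    (hB : Convex ℝ B) (hBc : IsClosed B) (hδ : 0 ≤ δ)
    (h : closedBall x δ ⊆ Metric.cthickening δ B) :
    x ∈ B := by
  by_contra hxB
  obtain ⟨f, u, hfB, hfx⟩ := geometric_hahn_banach_closed_point hB hBc hxB
  set z := (InnerProductSpace.toDual ℝ E).symm f
  have hfz : ∀ y, f y = inner ℝ z y := fun y => InnerProductSpace.toDual_symm_apply.symm
  -- push `x` a distance `δ` in the direction in which `f` grows fastest
  set d := (δ / ‖z‖) • z
  have hd : ‖d‖ ≤ δ ∧ f d = δ * ‖z‖ := by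
    rcases eq_or_ne z 0 with hz | hz
    · simp [d, hz, hfz, hδ]
    · have hz' : ‖z‖ ≠ 0 := norm_ne_zero_iff.2 hz
      rw [hfz, real_inner_smul_right, real_inner_self_eq_norm_sq, norm_smul,
        Real.norm_of_nonneg (by positivity)]
      constructor
      · rw [div_mul_cancel₀ _ hz']
      · field_simp
  have hxd : x + d ∈ Metric.cthickening δ B :=
    h (by simpa [mem_closedBall, dist_eq_norm] using hd.1)
  rw [hBc.cthickening_eq_biUnion_closedBall hδ] at hxd
  obtain ⟨b, hb, hxdb⟩ := mem_iUnion₂.1 hxd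
  have hfxdb : f (x + d - b) ≤ ‖z‖ * δ := calc
    f (x + d - b) = inner ℝ z (x + d - b) := hfz _
    _ ≤ ‖z‖ * ‖x + d - b‖ := real_inner_le_norm _ _
    _ ≤ ‖z‖ * δ := by
      gcongr
      rwa [← dist_eq_norm, ← mem_closedBall]
  have := hfB b hb
  simp only [map_sub, map_add, hd.2] at hfxdb
  linarith

theorem stmt10_general (n : ℕ) (v w : Fin n → EuclideanSpace ℝ (Fin 2)) :
    symmDiff (convexHull ℝ (Set.range v)) (convexHull ℝ (Set.range w)) ⊆
      {x | Metric.infDist x (frontier (convexHull ℝ (Set.range v))) ≤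
        ⨆ i : Fin n, ‖v i - w i‖} := by
  set A := convexHull ℝ (range v)
  set B := convexHull ℝ (range w)
  set δ := ⨆ i : Fin n, ‖v i - w i‖
  have hδ : 0 ≤ δ := Real.iSup_nonneg fun i => norm_nonneg _
  have hdist (i : Fin n) : dist (v i) (w i) ≤ δ :=
    (dist_eq_norm _ _).trans_le <|
      le_ciSup (f := fun i => ‖v i - w i‖) (finite_range _).bddAbove i
  have hAB : A ⊆ cthickening δ B := convexHull_range_subset_cthickening w v hdist
  have hBA : B ⊆ cthickening δ A :=
    convexHull_range_subset_cthickening v w fun i => dist_comm (v i) (w i) ▸ hdist i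
  intro x hx
  show infDist x (frontier A) ≤ δ
  by_contra! hfar
  have hball {y : EuclideanSpace ℝ (Fin 2)} (hy : y ∈ A) (hyx : dist y x ≤ δ) :
      closedBall x δ ⊆ A :=
    (convex_closedBall x δ).isPreconnected.subset_of_disjoint_frontier
      (disjoint_closedBall_of_lt_infDist hfar) ⟨y, hyx, hy⟩
  rcases mem_symmDiff.1 hx with ⟨hxA, hxB⟩ | ⟨hxB, hxA⟩
  · exact hxB <| (convex_convexHull ℝ _).mem_of_closedBall_subset_cthickening
      ((finite_range w).isCompact_convexHull ℝ).isClosed hδ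
      ((hball hxA (by simpa using hδ)).trans hAB)
  · rw [((finite_range v).isCompact_convexHull ℝ).cthickening_eq_biUnion_closedBall hδ] at hBA
    obtain ⟨y, hyA, hxy⟩ := mem_iUnion₂.1 (hBA hxB)
    exact hxA (hball hyA (dist_comm x y ▸ hxy) (mem_closedBall_self hδ))

/-- The symmetric difference of the convex hulls of two point lists `v, w` in the plane
is contained in the closed `δ`-thickening of the frontier of `conv{v i}`, where
`δ = max_i ‖v i - w i‖`. -/
theorem stmt10 (n : ℕ) (hn : 1 ≤ n) (v w : Fin n → EuclideanSpace ℝ (Fin 2)) :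
    symmDiff (convexHull ℝ (Set.range v)) (convexHull ℝ (Set.range w)) ⊆
      {x | Metric.infDist x (frontier (convexHull ℝ (Set.range v))) ≤
        ⨆ i : Fin n, ‖v i - w i‖} :=
  stmt10_general n v w
end

section
/- Let a, b ∈ ℝ² and δ > 0. Then the Lebesgue measure of the closed δ-thickening of the segment [a, b] is at most 2δ‖a − b‖ + πδ². -/
/-!
A rigid motion carries `[a, b]` to `[0, (L, 0)]`, `L = ‖a - b‖`, without changing the volume of
its thickening. A point within `δ` of `(t, 0)`, `0 ≤ t ≤ L`, lies in the left half-disk of radius `δ`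
around `0`, in the strip `(0, L] × [-δ, δ]`, or in the translate by `(L, 0)` of the complementary
right half-disk; the two half-disks together have the area `πδ²` of a full disk.
-/

open MeasureTheory Metric Set

theorem Isometry.preimage_cthickening {α β : Type*} [PseudoEMetricSpace α]
    [PseudoEMetricSpace β] {f : α → β} (hf : Isometry f) (hf' : Function.Surjective f) (δ : ℝ)
    (s : Set β) : f ⁻¹' cthickening δ s = cthickening δ (f ⁻¹' s) := by
  ext x
  rw [mem_preimage, mem_cthickening_iff, mem_cthickening_iff, ← infEDist_image hf,
    hf'.image_preimage]

section Reduction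

variable {E : Type*} [NormedAddCommGroup E] [InnerProductSpace ℝ E] [FiniteDimensional ℝ E]
  [MeasurableSpace E] [BorelSpace E]

theorem volume_cthickening_segment_eq_of_norm_eq {a b w : E} (h : ‖b - a‖ = ‖w‖) (δ : ℝ) :
    volume (cthickening δ (segment ℝ a b)) = volume (cthickening δ (segment ℝ 0 w)) := by
  let f := Submodule.reflection (ℝ ∙ (b - a - w))ᗮ
  let G : E ≃ᵃⁱ[ℝ] E := (AffineIsometryEquiv.vaddConst ℝ a).symm.trans f.toAffineIsometryEquiv
  have hG : MeasurePreserving G :=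
    f.measurePreserving.comp (measurePreserving_sub_right volume a)
  have hGseg : G '' segment ℝ a b = segment ℝ 0 w := by
    rw [← G.coe_toAffineEquiv, ← AffineEquiv.coe_toAffineMap, image_segment]
    simp [G, f, Submodule.reflection_sub h]
  rw [← G.injective.preimage_image (segment ℝ a b), hGseg,
    ← G.isometry.preimage_cthickening G.surjective,
    hG.measure_preimage isClosed_cthickening.measurableSet.nullMeasurableSet]

end Reduction

section Plane

local notation "ℝ²" => EuclideanSpace ℝ (Fin 2)

theorem EuclideanSpace.norm_sq_fin_two (x : ℝ²) : ‖x‖ ^ 2 = x 0 ^ 2 + x 1 ^ 2 := by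
  simp [EuclideanSpace.real_norm_sq_eq, Fin.sum_univ_two]

theorem EuclideanSpace.norm_le_iff_fin_two {x : ℝ²} {δ : ℝ} (hδ : 0 ≤ δ) :
    ‖x‖ ≤ δ ↔ x 0 ^ 2 + x 1 ^ 2 ≤ δ ^ 2 := by
  rw [← EuclideanSpace.norm_sq_fin_two, pow_le_pow_iff_left₀ (norm_nonneg x) hδ two_ne_zero]

theorem cthickening_segment_subset_fin_two {L δ : ℝ} (hL : 0 ≤ L) (hδ : 0 ≤ δ) :
    cthickening δ (segment ℝ 0 !₂[L, 0]) ⊆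
      (closedBall 0 δ ∩ {x | x 0 ≤ 0}) ∪ {x : ℝ² | x 0 ∈ Ioc 0 L ∧ x 1 ∈ Icc (-δ) δ} ∪
        (· - !₂[L, 0]) ⁻¹' (closedBall 0 δ \ {x | x 0 ≤ 0}) := by
  have hcompact : IsCompact (segment ℝ (0 : ℝ²) !₂[L, 0]) :=
    convexHull_pair (𝕜 := ℝ) (0 : ℝ²) !₂[L, 0] ▸ (toFinite _).isCompact_convexHull ℝ
  rw [hcompact.cthickening_eq_biUnion_closedBall hδ]
  intro x hx
  simp only [mem_iUnion₂, exists_prop, mem_closedBall, dist_eq_norm] at hx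
  obtain ⟨-, ⟨s, t, hs, ht, hst, rfl⟩, hx⟩ := hx
  simp only [smul_zero, zero_add, EuclideanSpace.norm_le_iff_fin_two hδ, PiLp.sub_apply,
    PiLp.smul_apply, Matrix.cons_val_zero, smul_eq_mul, Matrix.cons_val_one,
    Matrix.cons_val_fin_one, mul_zero, sub_zero] at hx
  simp only [mem_Ioc, mem_Icc, preimage_sdiff, preimage_ofPred_eq, PiLp.sub_apply,
    Matrix.cons_val_zero, tsub_le_iff_right, zero_add, mem_union, mem_inter_iff, mem_closedBall,
    dist_zero_right, EuclideanSpace.norm_le_iff_fin_two hδ, mem_ofPred_eq, mem_sdiff, mem_preimage,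
    Matrix.cons_val_one, Matrix.cons_val_fin_one, sub_zero, not_le]
  have htL : 0 ≤ t * L := mul_nonneg ht hL
  have htL' : t * L ≤ L := mul_le_of_le_one_left hL (by linarith)
  rcases le_or_gt (x 0) 0 with h0 | h0
  · exact .inl (.inl ⟨by nlinarith, h0⟩)
  rcases le_or_gt (x 0) L with h1 | h1
  · exact .inl (.inr ⟨⟨h0, h1⟩, abs_le_of_sq_le_sq' (by nlinarith) hδ⟩)
  · exact .inr ⟨by nlinarith, h1⟩

theorem volume_strip_fin_two (L δ : ℝ) (hδ : 0 ≤ δ) :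
    volume {x : ℝ² | x 0 ∈ Ioc 0 L ∧ x 1 ∈ Icc (-δ) δ} = ENNReal.ofReal (2 * δ * L) := by
  have hpi : {x : ℝ² | x 0 ∈ Ioc 0 L ∧ x 1 ∈ Icc (-δ) δ} =
      WithLp.ofLp ⁻¹' univ.pi ![Ioc 0 L, Icc (-δ) δ] := by
    ext x; simp [Fin.forall_fin_two]
  rw [hpi, (PiLp.volume_preserving_ofLp (Fin 2)).measure_preimage
    (MeasurableSet.univ_pi fun i => by fin_cases i <;> simp).nullMeasurableSet,
    volume_pi_pi, Fin.prod_univ_two]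
  simp only [Matrix.cons_val_zero, Matrix.cons_val_one, Real.volume_Ioc, Real.volume_Icc]
  rw [← ENNReal.ofReal_mul' (by linarith)]
  ring_nf

theorem volume_cthickening_segment_fin_two_le {L δ : ℝ} (hL : 0 ≤ L) (hδ : 0 ≤ δ) :
    volume (cthickening δ (segment ℝ 0 !₂[L, 0])) ≤
      ENNReal.ofReal (2 * δ * L + Real.pi * δ ^ 2) := by
  set B := closedBall (0 : ℝ²) δ
  set H := {x : ℝ² | x 0 ≤ 0}
  set S := {x : ℝ² | x 0 ∈ Ioc 0 L ∧ x 1 ∈ Icc (-δ) δ}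
  set C := (· - !₂[L, 0]) ⁻¹' (B \ H)
  have hH : MeasurableSet H := measurableSet_le (by fun_prop) measurable_const
  have hhalves : volume (B ∩ H) + volume C = volume B := by
    rw [(measurePreserving_sub_right volume _).measure_preimage
      (measurableSet_closedBall.diff hH).nullMeasurableSet, measure_inter_add_sdiff B hH]
  calc volume (cthickening δ (segment ℝ 0 !₂[L, 0]))
      ≤ volume (B ∩ H ∪ S ∪ C) := measure_mono (cthickening_segment_subset_fin_two hL hδ)
    _ ≤ volume (B ∩ H) + volume S + volume C :=
        (measure_union_le _ _).trans (add_le_add_left (measure_union_le _ _) _)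
    _ = volume S + volume B := by rw [← hhalves]; ring
    _ = ENNReal.ofReal (2 * δ * L + Real.pi * δ ^ 2) := by
        rw [volume_strip_fin_two L δ hδ, EuclideanSpace.volume_closedBall_fin_two,
          ENNReal.ofReal_add (by positivity) (by positivity), ENNReal.ofReal_mul Real.pi_pos.le,
          ENNReal.ofReal_pow hδ, mul_comm (ENNReal.ofReal Real.pi)]

end Plane

/-- The Lebesgue measure of the closed `δ`-thickening of a segment `[a, b]` in the plane
is at most `2δ‖a − b‖ + πδ²` (rectangle plus two half-disks). -/
theorem stmt11 (a b : EuclideanSpace ℝ (Fin 2)) (δ : ℝ) (hδ : 0 < δ) :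
    volume (Metric.cthickening δ (segment ℝ a b)) ≤
      ENNReal.ofReal (2 * δ * ‖a - b‖ + Real.pi * δ ^ 2) := by
  have hnorm : ‖b - a‖ = ‖!₂[‖a - b‖, 0]‖ := by
    simp [EuclideanSpace.norm_eq, norm_sub_rev]
  rw [volume_cthickening_segment_eq_of_norm_eq hnorm]
  exact volume_cthickening_segment_fin_two_le (norm_nonneg _) hδ.le
end

section
/- Let n ≥ 1 and let v : Fin n → ℝ². Then the frontier of the convex hull conv{v_0, …, v_{n−1}} is contained in the union over all pairs (i, j) of the segments [v_i, v_j]. -/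
/-!
A frontier point `x` of the convex hull `C` of finitely many points in the plane has a supporting
line `{f = f x}` with `f ≤ f x` on `C` (a separating functional if `C` has interior, a functional
vanishing on the direction of the affine span of `C` otherwise). Writing `x` as a convex
combination of the points, every point carrying positive weight lies on that line, so `x` is in the
convex hull of finitely many collinear points, which is the segment between the two extreme ones.
-/

open Module Set

section OrderedField

variable {𝕜 E : Type*} [Field 𝕜] [LinearOrder 𝕜] [IsStrictOrderedRing 𝕜] [AddCommGroup E]
  [Module 𝕜 E]

theorem mem_convexHull_inter_setOf_eq_of_forall_le {S : Set E} (f : E →ₗ[𝕜] 𝕜) {c : 𝕜}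
    (hS : ∀ y ∈ S, f y ≤ c) {x : E} (hx : x ∈ convexHull 𝕜 S) (hfx : f x = c) :
    x ∈ convexHull 𝕜 (S ∩ {y | f y = c}) := by
  classical
  obtain ⟨ι, t, w, z, hw₀, hw₁, hz, rfl⟩ := (convexHull_eq S).subset hx
  have hzero : ∀ i ∈ t, w i * (c - f (z i)) = 0 := by
    refine (Finset.sum_eq_zero_iff_of_nonneg fun i hi =>
      mul_nonneg (hw₀ i hi) (sub_nonneg.2 (hS _ (hz i hi)))).1 ?_
    rw [t.centerMass_eq_of_sum_1 _ hw₁, map_sum] at hfx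
    simp only [map_smul, smul_eq_mul] at hfx
    simp only [mul_sub, Finset.sum_sub_distrib, ← Finset.sum_mul, hw₁, one_mul, hfx, sub_self]
  rw [← Finset.centerMass_filter_ne_zero]
  refine Finset.centerMass_mem_convexHull _ (fun i hi => hw₀ i (Finset.mem_filter.1 hi).1)
    (by rw [Finset.sum_filter_ne_zero, hw₁]; exact one_pos) fun i hi => ?_
  obtain ⟨hit, hwi⟩ := Finset.mem_filter.1 hi
  exact ⟨hz i hit, (sub_eq_zero.1 ((mul_eq_zero.1 (hzero i hit)).resolve_left hwi)).symm⟩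

theorem Collinear.convexHull_subset_iUnion_segment {S : Set E} (hS : Collinear 𝕜 S)
    (hfin : S.Finite) : convexHull 𝕜 S ⊆ ⋃ a ∈ S, ⋃ b ∈ S, segment 𝕜 a b := by
  obtain ⟨p, d, hd⟩ := (collinear_iff_exists_forall_eq_smul_vadd S).1 hS
  let φ : 𝕜 →ᵃ[𝕜] E := AffineMap.lineMap p (d +ᵥ p)
  have hSφ : S ⊆ range φ := fun y hy => by
    obtain ⟨r, rfl⟩ := hd y hy
    exact ⟨r, by simp [φ, AffineMap.lineMap_apply]⟩
  obtain ⟨T, rfl, hinj⟩ := exists_image_eq_injOn_of_subset_range hSφ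
  have hT : T.Finite := hfin.of_finite_image hinj
  intro x hx
  rw [← AffineMap.image_convexHull] at hx
  obtain ⟨s, hs, rfl⟩ := hx
  have hTne : T.Nonempty := convexHull_nonempty_iff.1 ⟨s, hs⟩
  obtain ⟨a, ha, hmin⟩ := T.exists_min_image id hT hTne
  obtain ⟨b, hb, hmax⟩ := T.exists_max_image id hT hTne
  have hsab : s ∈ segment 𝕜 a b := by
    rw [segment_eq_Icc (show a ≤ b from hmin b hb)]
    exact convexHull_min (fun t ht => mem_Icc.2 ⟨hmin t ht, hmax t ht⟩) (convex_Icc a b) hs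
  have hφs : φ s ∈ segment 𝕜 (φ a) (φ b) := image_segment 𝕜 φ a b ▸ mem_image_of_mem φ hsab
  exact mem_iUnion₂.2 ⟨φ a, mem_image_of_mem φ ha, mem_iUnion₂.2 ⟨φ b, mem_image_of_mem φ hb, hφs⟩⟩

end OrderedField

theorem collinear_of_forall_apply_eq {k V : Type*} [Field k] [AddCommGroup V] [Module k V]
    (hV : finrank k V = 2) (f : Dual k V) (hf : f ≠ 0) {S : Set V} {c : k}
    (hS : ∀ y ∈ S, f y = c) : Collinear k S := by
  have : FiniteDimensional k V := finite_of_finrank_eq_succ hV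
  have hspan : vectorSpan k S ≤ LinearMap.ker f := by
    rw [vectorSpan_def, Submodule.span_le]
    rintro _ ⟨p, hp, q, hq, rfl⟩
    simp [hS p hp, hS q hq]
  have hker := Dual.finrank_ker_add_one_of_ne_zero hf
  have hle := Submodule.finrank_mono hspan
  rw [collinear_iff_finrank_le_one]
  omega

theorem Convex.exists_forall_le_of_mem_frontier {E : Type*} [NormedAddCommGroup E]
    [NormedSpace ℝ E] [FiniteDimensional ℝ E] {C : Set E} (hC : Convex ℝ C) {x : E}
    (hx : x ∈ frontier C) : ∃ f : E →L[ℝ] ℝ, f ≠ 0 ∧ ∀ y ∈ C, f y ≤ f x := by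
  by_cases hint : (interior C).Nonempty
  · obtain ⟨f, hf⟩ := geometric_hahn_banach_open_point hC.interior isOpen_interior hx.2
    obtain ⟨a, ha⟩ := hint
    refine ⟨f, fun h => (hf a ha).ne (by simp [h]), fun y hy => ?_⟩
    have hclosed : IsClosed {y | f y ≤ f x} := isClosed_le f.continuous continuous_const
    refine closure_minimal (fun z hz => (hf z hz).le) hclosed ?_
    rw [hC.closure_interior_eq_closure_of_nonempty_interior ⟨a, ha⟩]
    exact subset_closure hy
  · have hCne : C.Nonempty := closure_nonempty_iff.1 ⟨x, frontier_subset_closure hx⟩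
    have hdir : (affineSpan ℝ C).direction < ⊤ := lt_top_iff_ne_top.2 fun h =>
      hint <| hC.interior_nonempty_iff_affineSpan_eq_top.2 <|
        (AffineSubspace.direction_eq_top_iff_of_nonempty (hCne.mono (subset_affineSpan ℝ C))).1 h
    obtain ⟨f, hf0, hker⟩ := Submodule.exists_le_ker_of_lt_top _ hdir
    have hxspan : x ∈ affineSpan ℝ C :=
      (affineSpan ℝ C).closed_of_finiteDimensional.closure_subset_iff.2 (subset_affineSpan ℝ C)
        (frontier_subset_closure hx)
    refine ⟨LinearMap.toContinuousLinearMap f, by simpa using hf0, fun y hy => le_of_eq ?_⟩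
    have hyx := hker (AffineSubspace.vsub_mem_direction (subset_affineSpan ℝ C hy) hxspan)
    simpa [sub_eq_zero] using hyx

theorem stmt12_general (n : ℕ) (v : Fin n → EuclideanSpace ℝ (Fin 2)) :
    frontier (convexHull ℝ (Set.range v)) ⊆
      ⋃ i : Fin n, ⋃ j : Fin n, segment ℝ (v i) (v j) := by
  intro x hx
  have hxC : x ∈ convexHull ℝ (range v) :=
    ((finite_range v).isCompact_convexHull ℝ).isClosed.frontier_subset hx
  obtain ⟨f, hf0, hf⟩ := (convex_convexHull ℝ (range v)).exists_forall_le_of_mem_frontier hx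
  have hface : x ∈ convexHull ℝ (range v ∩ {y | f y = f x}) :=
    mem_convexHull_inter_setOf_eq_of_forall_le f.toLinearMap
      (fun y hy => hf y (subset_convexHull ℝ _ hy)) hxC rfl
  have hcol : Collinear ℝ (range v ∩ {y | f y = f x}) :=
    collinear_of_forall_apply_eq finrank_euclideanSpace_fin f.toLinearMap
      (ContinuousLinearMap.coe_injective.ne hf0) fun y hy => hy.2
  obtain ⟨a, ⟨⟨i, rfl⟩, -⟩, ha⟩ := mem_iUnion₂.1
    (hcol.convexHull_subset_iUnion_segment ((finite_range v).inter_of_left _) hface)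
  obtain ⟨b, ⟨⟨j, rfl⟩, -⟩, hb⟩ := mem_iUnion₂.1 ha
  exact mem_iUnion₂.2 ⟨i, j, hb⟩

/-- In the plane, the frontier of the convex hull of finitely many points `v 0, …, v (n-1)`
is contained in the union of the segments `[v i, v j]` over all pairs `(i, j)`. -/
theorem stmt12 (n : ℕ) (hn : 1 ≤ n) (v : Fin n → EuclideanSpace ℝ (Fin 2)) :
    frontier (convexHull ℝ (Set.range v)) ⊆
      ⋃ i : Fin n, ⋃ j : Fin n, segment ℝ (v i) (v j) :=
  stmt12_general n v
end

section
/- Let n ≥ 1 and R > 0, and let v, w : Fin n → ℝ² be point lists with all points contained in the closed ball of radius R centered at the origin. Set δ = max_{0 ≤ i ≤ n−1} ‖v_i − w_i‖. Then the Lebesgue measure of the symmetric difference of the convex hulls satisfies vol( conv{v_0, …, v_{n−1}} Δ conv{w_0, …, w_{n−1}} ) ≤ 2 n² R (2 + π) δ. In particular, the map v ↦ χ_{conv{v_i}} is Lipschitz from (ℝ²)^n (with the max norm) into L¹(ℝ²) on tuples contained in the ball of radius R. -/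
/-
Replace the vertices `v i` by the `w i` one at a time. If every vertex moves by a vector in the
segment `[0, d]`, the new hull `C'` satisfies `C ⊆ C' + [0, d]`, so `C \ C'` lies in the region
swept out by `C'` under translation along `[0, d]`. For a closed convex `K` in the disc of
radius `R`, that region `(K + [0, u]) \ K` has area at most `2 R ‖u‖`: in coordinates in which
`u` is vertical, every vertical slice of `K` is an interval that the translation lengthens by
at most `‖u‖`, and only slices over a base of length `2 R` are nonempty. Each swap thus costs
at most `4 R δ`, and the `n` swaps together at most `4 n R δ ≤ 2 n² R (2 + π) δ`.
-/

open MeasureTheory Set Pointwise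
open scoped symmDiff

theorem Set.OrdConnected.add_Icc_diff_subset {I : Set ℝ} (hI : I.OrdConnected) (c : ℝ) :
    (I + Icc 0 c) \ I ⊆ Icc (sSup I) (sSup I + c) := by
  rintro _ ⟨⟨a, ha, t, ht, rfl⟩, hat⟩
  have hub : ∀ b ∈ I, b ≤ a + t := fun b hb => by
    by_contra! h
    exact hat (hI.out ha hb ⟨le_add_of_nonneg_right ht.1, h.le⟩)
  have hle := le_csSup ⟨a + t, hub⟩ ha
  exact ⟨csSup_le ⟨a, ha⟩ hub, by linarith [ht.2]⟩

theorem Set.OrdConnected.volume_add_Icc_diff_le {I : Set ℝ} (hI : I.OrdConnected) (c : ℝ) :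
    volume ((I + Icc 0 c) \ I) ≤ ENNReal.ofReal c :=
  (measure_mono (hI.add_Icc_diff_subset c)).trans_eq (by simp)

theorem volume_add_segment_diff_le_of_fst_mem {K : Set (ℝ × ℝ)} (hK : IsClosed K)
    (hKc : Convex ℝ K) {a b : ℝ} (hab : ∀ p ∈ K, p.1 ∈ Icc a b) {c : ℝ} (hc : 0 ≤ c) :
    volume ((K + segment ℝ 0 (0, c)) \ K) ≤ ENNReal.ofReal ((b - a) * c) := by
  have hseg : segment ℝ (0 : ℝ × ℝ) (0, c) = Prod.mk 0 '' Icc 0 c := by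
    rw [← segment_eq_Icc hc, Prod.image_mk_segment_right]; rfl
  have hmeas : MeasurableSet ((K + segment ℝ 0 (0, c)) \ K) := by
    refine (IsClosed.measurableSet ?_).diff hK.measurableSet
    exact hK.add_right_of_isCompact (hseg ▸ isCompact_Icc.image (by fun_prop))
  have hslice : ∀ x, volume (Prod.mk x ⁻¹' ((K + segment ℝ 0 (0, c)) \ K)) ≤
      (Icc a b).indicator (fun _ => ENNReal.ofReal c) x := by
    intro x
    set Kx := Prod.mk x ⁻¹' K
    have hKx : Kx.OrdConnected := ⟨fun y₁ h₁ y₂ h₂ y hy => hKc.segment_subset h₁ h₂ <| by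
      rw [← Prod.image_mk_segment_right]; exact ⟨y, Icc_subset_segment hy, rfl⟩⟩
    have hsub : Prod.mk x ⁻¹' ((K + segment ℝ 0 (0, c)) \ K) ⊆ (Kx + Icc 0 c) \ Kx := by
      rintro y ⟨⟨k, hk, s, hs, hks⟩, hy⟩
      rw [hseg] at hs
      obtain ⟨t, ht, rfl⟩ := hs
      obtain ⟨hk₁, hk₂⟩ := Prod.ext_iff.1 hks
      refine ⟨⟨y - t, ?_, t, ht, sub_add_cancel y t⟩, hy⟩
      have : k = (x, y - t) := Prod.ext (by simpa using hk₁) (by simp at hk₂; linarith)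
      rwa [this] at hk
    by_cases hx : x ∈ Icc a b
    · rw [indicator_of_mem hx]
      exact (measure_mono hsub).trans (hKx.volume_add_Icc_diff_le c)
    · have hempty : Kx = ∅ := eq_empty_of_forall_notMem fun y hy => hx (hab _ hy)
      rw [indicator_of_notMem hx]
      exact (measure_mono hsub).trans_eq (by simp [hempty])
  rw [Measure.volume_eq_prod, Measure.prod_apply hmeas]
  refine (lintegral_mono hslice).trans_eq ?_
  rw [lintegral_indicator_const measurableSet_Icc, Real.volume_Icc, ← ENNReal.ofReal_mul hc,
    mul_comm]

theorem MeasureTheory.MeasurePreserving.measure_add_segment_diff_image {E F : Type*}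
    [NormedAddCommGroup E] [NormedSpace ℝ E] [MeasurableSpace E] [BorelSpace E]
    [NormedAddCommGroup F] [NormedSpace ℝ F] [MeasurableSpace F] [BorelSpace F]
    {μ : Measure E} {ν : Measure F} (T : E ≃L[ℝ] F) (hT : MeasurePreserving T μ ν)
    (K : Set E) (u : E) :
    ν ((T '' K + segment ℝ 0 (T u)) \ T '' K) = μ ((K + segment ℝ 0 u) \ K) := by
  have himage : T '' K + segment ℝ 0 (T u) = T '' (K + segment ℝ 0 u) := by
    rw [image_add, ← map_zero T]
    exact congrArg _ (image_segment ℝ (T : E →L[ℝ] F).toLinearMap.toAffineMap 0 u).symm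
  rw [← hT.measure_preimage_emb T.toHomeomorph.measurableEmbedding, himage,
    ← image_sdiff T.injective, preimage_image_eq _ T.injective]

local notation "E2" => EuclideanSpace ℝ (Fin 2)

theorem exists_measurePreserving_equiv_prod (u : E2) :
    ∃ T : E2 ≃L[ℝ] ℝ × ℝ, MeasurePreserving T ∧ T u = (0, ‖u‖) ∧ ∀ x, |(T x).1| ≤ ‖x‖ := by
  set e : E2 := EuclideanSpace.single 1 1
  set ρ := Submodule.reflection (ℝ ∙ (u - ‖u‖ • e))ᗮ
  have hρ : ρ u = ‖u‖ • e := Submodule.reflection_sub (by simp [e, norm_smul])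
  let S : E2 ≃L[ℝ] ℝ × ℝ :=
    (PiLp.continuousLinearEquiv 2 ℝ _).trans (ContinuousLinearEquiv.finTwoArrow ℝ ℝ)
  have hS : MeasurePreserving S :=
    (volume_preserving_finTwoArrow ℝ).comp (PiLp.volume_preserving_ofLp _)
  refine ⟨ρ.toContinuousLinearEquiv.trans S, hS.comp ρ.measurePreserving, ?_, fun x => ?_⟩
  · simp [S, hρ, e]
  · simpa [S] using (PiLp.norm_apply_le (ρ x) 0).trans_eq (ρ.norm_map x)

theorem volume_add_segment_diff_le {K : Set E2} (hK : IsClosed K) (hKc : Convex ℝ K) {R : ℝ}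
    (hKR : K ⊆ Metric.closedBall 0 R) (u : E2) :
    volume ((K + segment ℝ 0 u) \ K) ≤ ENNReal.ofReal (2 * R * ‖u‖) := by
  obtain ⟨T, hT, hTu, hT₁⟩ := exists_measurePreserving_equiv_prod u
  have hbound : ∀ p ∈ T '' K, p.1 ∈ Icc (-R) R := by
    rintro _ ⟨x, hx, rfl⟩
    exact abs_le.1 ((hT₁ x).trans (mem_closedBall_zero_iff.1 (hKR hx)))
  have hTK : IsClosed (T '' K) := T.toHomeomorph.isClosedMap K hK
  rw [← hT.measure_add_segment_diff_image, hTu]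
  refine (volume_add_segment_diff_le_of_fst_mem hTK (hKc.linear_image T.toLinearMap) hbound
    (norm_nonneg u)).trans_eq ?_
  ring_nf

theorem convexHull_range_subset_add {𝕜 E ι : Type*} [Field 𝕜] [LinearOrder 𝕜]
    [IsStrictOrderedRing 𝕜] [AddCommGroup E] [Module 𝕜 E] {a b : ι → E} {S : Set E}
    (hS : Convex 𝕜 S) (h : ∀ i, a i - b i ∈ S) :
    convexHull 𝕜 (range a) ⊆ convexHull 𝕜 (range b) + S := by
  refine convexHull_min (range_subset_iff.2 fun i => ?_) ((convex_convexHull 𝕜 _).add hS)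
  rw [← add_sub_cancel (b i) (a i)]
  exact add_mem_add (subset_convexHull 𝕜 _ (mem_range_self i)) (h i)

theorem volume_convexHull_diff_le {ι : Type*} [Finite ι] {a b : ι → E2} {R : ℝ}
    (hb : ∀ i, b i ∈ Metric.closedBall 0 R) {d : E2} (h : ∀ i, a i - b i ∈ segment ℝ 0 d) :
    volume (convexHull ℝ (range a) \ convexHull ℝ (range b)) ≤ ENNReal.ofReal (2 * R * ‖d‖) := by
  have hclosed : IsClosed (convexHull ℝ (range b)) :=
    ((finite_range b).isCompact_convexHull ℝ).isClosed
  have hball : convexHull ℝ (range b) ⊆ Metric.closedBall 0 R :=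
    convexHull_min (range_subset_iff.2 hb) (convex_closedBall 0 R)
  have hsub := convexHull_range_subset_add (convex_segment (0 : E2) d) h
  exact (measure_mono (sdiff_subset_sdiff_left hsub)).trans
    (volume_add_segment_diff_le hclosed (convex_convexHull ℝ _) hball d)

theorem volume_symmDiff_convexHull_update_le {ι : Type*} [Finite ι] [DecidableEq ι]
    {a : ι → E2} {R : ℝ} (ha : ∀ i, a i ∈ Metric.closedBall 0 R) (j : ι) {p : E2}
    (hp : p ∈ Metric.closedBall 0 R) :
    volume (convexHull ℝ (range a) ∆ convexHull ℝ (range (Function.update a j p))) ≤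
      ENNReal.ofReal (4 * R * ‖a j - p‖) := by
  have hR : 0 ≤ R := dist_nonneg.trans hp
  have hupdate : ∀ i, Function.update a j p i ∈ Metric.closedBall 0 R := by
    intro i; rcases eq_or_ne i j with rfl | hi <;> simp [*]
  have hsub : ∀ i, a i - Function.update a j p i ∈ segment ℝ 0 (a j - p) := by
    intro i; rcases eq_or_ne i j with rfl | hi <;> simp [*, left_mem_segment, right_mem_segment]
  have hsub' : ∀ i, Function.update a j p i - a i ∈ segment ℝ 0 (p - a j) := by
    intro i; rcases eq_or_ne i j with rfl | hi <;> simp [*, left_mem_segment, right_mem_segment]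
  calc _ ≤ _ := measure_union_le _ _
    _ ≤ ENNReal.ofReal (2 * R * ‖a j - p‖) + ENNReal.ofReal (2 * R * ‖p - a j‖) :=
        add_le_add (volume_convexHull_diff_le hupdate hsub) (volume_convexHull_diff_le ha hsub')
    _ = ENNReal.ofReal (4 * R * ‖a j - p‖) := by
        rw [norm_sub_rev p, ← ENNReal.ofReal_add (by positivity) (by positivity)]
        ring_nf

theorem volume_symmDiff_convexHull_piecewise_le {ι : Type*} [Finite ι] [DecidableEq ι]
    {v w : ι → E2} {R : ℝ} (hv : ∀ i, v i ∈ Metric.closedBall 0 R)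
    (hw : ∀ i, w i ∈ Metric.closedBall 0 R) (s : Finset ι) :
    volume (convexHull ℝ (range v) ∆ convexHull ℝ (range (s.piecewise w v))) ≤
      ENNReal.ofReal (4 * R * ∑ i ∈ s, ‖v i - w i‖) := by
  induction s using Finset.induction_on with
  | empty => simp
  | insert j s hj ih =>
    have hR : 0 ≤ R := dist_nonneg.trans (hw j)
    have hpiecewise : ∀ i, s.piecewise w v i ∈ Metric.closedBall 0 R := fun i =>
      s.piecewise_cases _ _ (· ∈ Metric.closedBall 0 R) (hw i) (hv i)
    have hstep := volume_symmDiff_convexHull_update_le hpiecewise j (hw j)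
    rw [s.piecewise_eq_of_notMem _ _ hj] at hstep
    rw [Finset.piecewise_insert, Finset.sum_insert hj, mul_add, add_comm,
      ENNReal.ofReal_add (by positivity) (by positivity)]
    exact (measure_symmDiff_le _ _ _).trans (add_le_add ih hstep)

theorem volume_symmDiff_convexHull_le {ι : Type*} [Fintype ι] {v w : ι → E2} {R : ℝ}
    (hv : ∀ i, v i ∈ Metric.closedBall 0 R) (hw : ∀ i, w i ∈ Metric.closedBall 0 R) :
    volume (convexHull ℝ (range v) ∆ convexHull ℝ (range w)) ≤
      ENNReal.ofReal (4 * R * ∑ i, ‖v i - w i‖) := by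
  classical
  simpa using volume_symmDiff_convexHull_piecewise_le hv hw Finset.univ

theorem stmt13_general (n : ℕ) (R : ℝ) (hR : 0 < R)
    (v w : Fin n → EuclideanSpace ℝ (Fin 2))
    (hv : ∀ i, v i ∈ Metric.closedBall (0 : EuclideanSpace ℝ (Fin 2)) R)
    (hw : ∀ i, w i ∈ Metric.closedBall (0 : EuclideanSpace ℝ (Fin 2)) R) :
    volume (symmDiff (convexHull ℝ (Set.range v)) (convexHull ℝ (Set.range w))) ≤
      ENNReal.ofReal (2 * n ^ 2 * R * (2 + Real.pi) * ⨆ i : Fin n, ‖v i - w i‖) := by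
  set δ := ⨆ i : Fin n, ‖v i - w i‖
  have hδ : ∀ i, ‖v i - w i‖ ≤ δ := le_ciSup (finite_range _).bddAbove
  have hδ₀ : 0 ≤ δ := Real.iSup_nonneg fun i => norm_nonneg _
  have hsum : ∑ i, ‖v i - w i‖ ≤ n * δ := by
    simpa using Finset.sum_le_sum fun i (_ : i ∈ Finset.univ) => hδ i
  refine (volume_symmDiff_convexHull_le hv hw).trans (ENNReal.ofReal_le_ofReal ?_)
  have hcoeff : (4 : ℝ) * n ≤ 2 * n ^ 2 * (2 + Real.pi) := by
    have hn : (n : ℝ) ≤ n ^ 2 := by exact_mod_cast Nat.le_self_pow two_ne_zero n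
    nlinarith [Real.pi_pos]
  calc 4 * R * ∑ i, ‖v i - w i‖ ≤ 4 * R * (n * δ) := by gcongr
    _ = 4 * n * (R * δ) := by ring
    _ ≤ 2 * n ^ 2 * (2 + Real.pi) * (R * δ) := by gcongr
    _ = _ := by ring

/-- `L¹`-stability of convex hulls of point lists under vertex perturbation: if all
points of `v, w : Fin n → ℝ²` lie in the closed ball of radius `R` and
`δ = max_i ‖v i - w i‖`, then the Lebesgue measure of the symmetric difference of the
convex hulls is at most `2 n² R (2 + π) δ`. -/
theorem stmt13 (n : ℕ) (hn : 1 ≤ n) (R : ℝ) (hR : 0 < R)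
    (v w : Fin n → EuclideanSpace ℝ (Fin 2))
    (hv : ∀ i, v i ∈ Metric.closedBall (0 : EuclideanSpace ℝ (Fin 2)) R)
    (hw : ∀ i, w i ∈ Metric.closedBall (0 : EuclideanSpace ℝ (Fin 2)) R) :
    volume (symmDiff (convexHull ℝ (Set.range v)) (convexHull ℝ (Set.range w))) ≤
      ENNReal.ofReal (2 * n ^ 2 * R * (2 + Real.pi) * ⨆ i : Fin n, ‖v i - w i‖) :=
  stmt13_general n R hR v w hv hw
end
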